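/- Let P7 = s1–c1–s2–c2–s3–c3–s4 be an induced path in a bipartite species-character graph G_M on four species and three characters. Then in any reduction of G_M, the central character c2 cannot be the first of {c1, c2, c3} to be realized. -/

import Mathlib

open Classical

/-- A red-black graph: a bipartite graph on characters `C` and species `S`
with edges colored black or red. -/
structure RBGraph (S C : Type) where
  black : C → S → Prop
  red : C → S → Prop

namespace RBGraph

variable {S C : Type}

/-- `c` and `s` are adjacent (by an edge of either color). -/
def adj (G : RBGraph S C) (c : C) (s : S) : Prop := G.black c s ∨ G.red c s

/-- The underlying simple graph on `S ⊕ C`. -/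
def toSimple (G : RBGraph S C) : SimpleGraph (S ⊕ C) where
  Adj x y := (∃ s c, x = Sum.inl s ∧ y = Sum.inr c ∧ G.adj c s) ∨
             (∃ s c, x = Sum.inr c ∧ y = Sum.inl s ∧ G.adj c s)
  symm := by
    constructor
    rintro x y (⟨s, c, rfl, rfl, h⟩ | ⟨s, c, rfl, rfl, h⟩)
    · exact Or.inr ⟨s, c, rfl, rfl, h⟩
    · exact Or.inl ⟨s, c, rfl, rfl, h⟩
  loopless := by
    constructor
    rintro x (⟨s, c, rfl, h, -⟩ | ⟨s, c, rfl, h, -⟩) <;> simp at h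

/-- `s` lies in the connected component of `c`. -/
def sameComp (G : RBGraph S C) (c : C) (s : S) : Prop :=
  G.toSimple.Reachable (Sum.inr c) (Sum.inl s)

/-- A character is active if it is incident to a red edge. -/
def active (G : RBGraph S C) (c : C) : Prop := ∃ s, G.red c s

/-- A character is inactive if it is incident to no red edge. -/
def inactive (G : RBGraph S C) (c : C) : Prop := ¬ G.active c

/-- A character adjacent via red edges to all species of its connected component. -/
def redUniversal (G : RBGraph S C) (c : C) : Prop :=
  G.active c ∧ ∀ s, G.sameComp c s → G.red c s

/-- Remove all edges of red-universal characters (one round). -/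
def pruneStep (G : RBGraph S C) : RBGraph S C :=
  ⟨fun c s => G.black c s ∧ ¬ G.redUniversal c,
   fun c s => G.red c s ∧ ¬ G.redUniversal c⟩

/-- Repeatedly remove all edges of red-universal characters. -/
def prune [Fintype C] (G : RBGraph S C) : RBGraph S C :=
  pruneStep^[Fintype.card C] G

/-- Realization of a character `c`: add red edges from `c` to the species of its
connected component not adjacent to `c`, delete the black edges of `c`, then
repeatedly remove the edges of red-universal characters. -/
def realize [Fintype C] (G : RBGraph S C) (c : C) : RBGraph S C :=
  prune ⟨fun c' s => G.black c' s ∧ c' ≠ c,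
         fun c' s => G.red c' s ∨ (c' = c ∧ ¬ G.black c s ∧ G.sameComp c s)⟩

/-- Realize a sequence of characters in order. -/
def realizeSeq [Fintype C] (G : RBGraph S C) (l : List C) : RBGraph S C :=
  l.foldl realize G

/-- The graph has no edges. -/
def edgeless (G : RBGraph S C) : Prop := ∀ c s, ¬ G.adj c s

/-- A red Σ-graph: an induced all-red path `s1 - c1 - s2 - c2 - s3`. -/
def redSigma (G : RBGraph S C) : Prop :=
  ∃ (c1 c2 : C) (s1 s2 s3 : S), c1 ≠ c2 ∧ s1 ≠ s2 ∧ s2 ≠ s3 ∧ s1 ≠ s3 ∧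
    G.red c1 s1 ∧ G.red c1 s2 ∧ G.red c2 s2 ∧ G.red c2 s3 ∧
    ¬ G.adj c1 s3 ∧ ¬ G.adj c2 s1

/-- A reduction of a red-black graph: an ordering of its (non-isolated) inactive
characters whose successive realizations yield an edgeless graph, never creating
a red Σ-graph. -/
def isReductionFrom [Fintype C] (G : RBGraph S C) (l : List C) : Prop :=
  l.Nodup ∧ (∀ c, G.inactive c → (∃ s, G.black c s) → c ∈ l) ∧
  (∀ c ∈ l, G.inactive c) ∧
  edgeless (realizeSeq G l) ∧
  ∀ k ≤ l.length, ¬ redSigma (realizeSeq G (l.take k))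

/-- A red-black graph is reducible if it admits a reduction. -/
def reducible [Fintype C] (G : RBGraph S C) : Prop := ∃ l, isReductionFrom G l

/-- A character is safe if its realization yields a reducible red-black graph. -/
def safe [Fintype C] (G : RBGraph S C) (c : C) : Prop := reducible (G.realize c)

/-- The (all-black) red-black graph of a binary species-character matrix. -/
def ofMatrix (M : C → S → Prop) : RBGraph S C := ⟨M, fun _ _ => False⟩

/-- A reduction of the graph of a matrix: an ordering of all characters whose
successive realizations yield an edgeless graph, never creating a red Σ-graph. -/
def isReduction [Fintype C] (M : C → S → Prop) (l : List C) : Prop :=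
  l.Nodup ∧ (∀ c, c ∈ l) ∧ edgeless (realizeSeq (ofMatrix M) l) ∧
  ∀ k ≤ l.length, ¬ redSigma (realizeSeq (ofMatrix M) (l.take k))

/-- The partial reduction after realizing the first `t` characters of `l`. -/
def partialRed [Fintype C] (M : C → S → Prop) (l : List C) (t : ℕ) : RBGraph S C :=
  realizeSeq (ofMatrix M) (l.take t)

/-- The matrix is maximal: no character's species set is contained in that of
another character. -/
def MaximalM (M : C → S → Prop) : Prop :=
  ∀ c1 c2 : C, c1 ≠ c2 → ¬ (∀ s, M c1 s → M c2 s)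

/-- A vertex is non-isolated if it has an incident edge. -/
def nonIsolated (G : RBGraph S C) : S ⊕ C → Prop
  | Sum.inl s => ∃ c, G.adj c s
  | Sum.inr c => ∃ s, G.adj c s

/-- The graph has a single connected component (ignoring isolated vertices). -/
def singleComponent (G : RBGraph S C) : Prop :=
  ∀ x y, G.nonIsolated x → G.nonIsolated y → G.toSimple.Reachable x y

/-- Species incident only to black edges (and at least one of them). -/
def SB (G : RBGraph S C) : Set S := {s | (∃ c, G.black c s) ∧ ∀ c, ¬ G.red c s}

/-- Species incident to at least one red edge. -/
def SR (G : RBGraph S C) : Set S := {s | ∃ c, G.red c s}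

/-- Inactive characters whose neighborhood is contained in `S_R`. -/
def CC (G : RBGraph S C) : Set C :=
  {c | G.inactive c ∧ (∃ s, G.black c s) ∧ ∀ s, G.black c s → s ∈ G.SR}

/-- Inactive characters with a neighbor and a non-neighbor in `S_R`. -/
def CI (G : RBGraph S C) : Set C :=
  {c | G.inactive c ∧ (∃ s ∈ G.SR, G.black c s) ∧ (∃ s ∈ G.SR, ¬ G.black c s)}

/-- Inactive characters with a neighbor in `S_B` that are universal on `S_R`. -/
def CU (G : RBGraph S C) : Set C :=
  {c | G.inactive c ∧ (∃ s ∈ G.SB, G.black c s) ∧ ∀ s ∈ G.SR, G.black c s}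

/-- The subgraph induced by a set of characters and a set of species. -/
def induced (G : RBGraph S C) (Cs : Set C) (Ss : Set S) : RBGraph S C :=
  ⟨fun c s => G.black c s ∧ c ∈ Cs ∧ s ∈ Ss,
   fun c s => G.red c s ∧ c ∈ Cs ∧ s ∈ Ss⟩

/-- `c2` is the center of an induced path on four species and three characters. -/
def isP7Center (M : C → S → Prop) (c2 : C) : Prop :=
  ∃ (c1 c3 : C) (s1 s2 s3 s4 : S),
    c1 ≠ c2 ∧ c2 ≠ c3 ∧ c1 ≠ c3 ∧
    s1 ≠ s2 ∧ s1 ≠ s3 ∧ s1 ≠ s4 ∧ s2 ≠ s3 ∧ s2 ≠ s4 ∧ s3 ≠ s4 ∧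
    M c1 s1 ∧ M c1 s2 ∧ M c2 s2 ∧ M c2 s3 ∧ M c3 s3 ∧ M c3 s4 ∧
    ¬ M c1 s3 ∧ ¬ M c1 s4 ∧ ¬ M c2 s1 ∧ ¬ M c2 s4 ∧ ¬ M c3 s1 ∧ ¬ M c3 s2

/-- Minimum-degree species none of whose characters is the center of an induced `P7`. -/
def S7m (M : C → S → Prop) : Set S :=
  {s | (∀ s', {c | M c s}.ncard ≤ {c | M c s'}.ncard) ∧
       ∀ c, M c s → ¬ isP7Center M c}

/-- The species of `S_B` not adjacent to `cm`. -/
def SBm (G : RBGraph S C) (cm : C) : Set S := {s | s ∈ G.SB ∧ ¬ G.black cm s}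

/-- `C_I` together with the characters of `C_U` with a neighbor in `S_B^m`. -/
def CBm (G : RBGraph S C) (cm : C) : Set C :=
  G.CI ∪ {c ∈ G.CU | ∃ s ∈ G.SBm cm, G.black c s}

end RBGraph

/-!
Realizing the center `c2` first makes it red towards `s1` and `s4` and non-adjacent to `s2`,
`s3`. From then on `c2` cannot become red-universal, since `s2` stays in its component through
the untouched `c1`. Pruning only deletes edges of red-universal characters and realizing another
character leaves the edges of `c1`, `c2`, `c3` alone, so this configuration survives until the
first of `c1`, `c3` is realized, say `c1`. That realization makes `c1` red towards `s3`, `s4`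
and deletes its edge to `s1`, so `s3 - c1 - s4 - c2 - s1` is a red Σ-graph, neither of whose
characters can ever be pruned.
-/

theorem List.notMem_take_of_le_idxOf {α : Type*} [DecidableEq α] {l : List α} {a : α} {n : ℕ}
    (hn : n ≤ l.idxOf a) : a ∉ l.take n := fun ha =>
  (((List.mem_take_iff_idxOf_lt (List.mem_of_mem_take ha)).1 ha).trans_le hn).false

namespace RBGraph

variable {S C : Type} {G H K : RBGraph S C} {D : Set C} {a b c d : C} {x y z : S}

lemma sameComp_of_adj (h : G.adj c x) : G.sameComp c x :=
  SimpleGraph.Adj.reachable (Or.inr ⟨x, c, rfl, rfl, h⟩)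

lemma sameComp.step (h : G.sameComp c x) (hdx : G.adj d x) (hdy : G.adj d y) :
    G.sameComp c y :=
  h.trans ((SimpleGraph.Adj.reachable (Or.inl ⟨x, d, rfl, rfl, hdx⟩)).trans
    (sameComp_of_adj hdy))

lemma not_redUniversal_of_sameComp (hy : G.sameComp c y) (hr : ¬ G.red c y) :
    ¬ G.redUniversal c :=
  fun hu => hr (hu.2 y hy)

def preRealize (G : RBGraph S C) (c : C) : RBGraph S C :=
  ⟨fun c' s => G.black c' s ∧ c' ≠ c,
   fun c' s => G.red c' s ∨ (c' = c ∧ ¬ G.black c s ∧ G.sameComp c s)⟩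

lemma realize_eq_prune_preRealize [Fintype C] (G : RBGraph S C) (c : C) :
    G.realize c = prune (G.preRealize c) := rfl

lemma realizeSeq_append [Fintype C] (G : RBGraph S C) (l₁ l₂ : List C) :
    realizeSeq G (l₁ ++ l₂) = realizeSeq (realizeSeq G l₁) l₂ :=
  List.foldl_append

lemma realizeSeq_take_add_one [Fintype C] (G : RBGraph S C) {l : List C} {n : ℕ}
    (hn : n < l.length) :
    realizeSeq G (l.take (n + 1)) = (realizeSeq G (l.take n)).realize l[n] := by
  rw [List.take_add_one, List.getElem?_eq_getElem hn, Option.toList_some, realizeSeq_append]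
  rfl

def EdgesEqOn (G H : RBGraph S C) (D : Set C) : Prop :=
  Set.EqOn G.black H.black D ∧ Set.EqOn G.red H.red D

lemma EdgesEqOn.refl (G : RBGraph S C) (D : Set C) : EdgesEqOn G G D :=
  ⟨Set.eqOn_refl _ _, Set.eqOn_refl _ _⟩

lemma EdgesEqOn.trans (h₁ : EdgesEqOn G H D) (h₂ : EdgesEqOn H K D) : EdgesEqOn G K D :=
  ⟨h₁.1.trans h₂.1, h₁.2.trans h₂.2⟩

def Unprunable (G : RBGraph S C) (D : Set C) : Prop :=
  ∀ H, EdgesEqOn G H D → ∀ c ∈ D, ¬ H.redUniversal c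

lemma Unprunable.of_edgesEqOn (h : Unprunable G D) (hGH : EdgesEqOn G H D) :
    Unprunable H D :=
  fun K hHK => h K (hGH.trans hHK)

lemma unprunable_of_inactive (h : ∀ c ∈ D, G.inactive c) : Unprunable G D := by
  rintro H hGH c hc ⟨⟨s, hs⟩, -⟩
  exact h c hc ⟨s, by rwa [hGH.2 hc]⟩

lemma pruneStep_edgesEqOn (h : Unprunable G D) : EdgesEqOn G (pruneStep G) D := by
  have hu : ∀ c ∈ D, ¬ G.redUniversal c := h G (.refl G D)
  exact ⟨fun c hc => funext fun _ => propext (and_iff_left (hu c hc)).symm,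
    fun c hc => funext fun _ => propext (and_iff_left (hu c hc)).symm⟩

lemma prune_edgesEqOn [Fintype C] (h : Unprunable G D) : EdgesEqOn G (prune G) D :=
  Function.Iterate.rec (fun H => EdgesEqOn G H D) (.refl G D)
    (fun _ hH => hH.trans (pruneStep_edgesEqOn (h.of_edgesEqOn hH))) _

lemma preRealize_edgesEqOn (hc : c ∉ D) : EdgesEqOn G (G.preRealize c) D := by
  have hne : ∀ c' ∈ D, c' ≠ c := fun c' hc' h => hc (h ▸ hc')
  exact ⟨fun c' hc' => funext fun _ => by simp [preRealize, hne c' hc'],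
    fun c' hc' => funext fun _ => by simp [preRealize, hne c' hc']⟩

lemma realize_edgesEqOn [Fintype C] (h : Unprunable G D) (hc : c ∉ D) :
    EdgesEqOn G (G.realize c) D :=
  (preRealize_edgesEqOn hc).trans
    (prune_edgesEqOn (h.of_edgesEqOn (preRealize_edgesEqOn hc)))

lemma realizeSeq_edgesEqOn [Fintype C] (h : Unprunable G D) {l : List C}
    (hl : ∀ c ∈ l, c ∉ D) : EdgesEqOn G (realizeSeq G l) D := by
  induction l generalizing G with
  | nil => exact .refl G D
  | cons c l ih =>
    have hc := realize_edgesEqOn h (hl c List.mem_cons_self)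
    exact hc.trans (ih (h.of_edgesEqOn hc) fun c' hc' => hl c' (List.mem_cons_of_mem c hc'))

/-- The red Σ-graph `x - a - y - b - z`. -/
def IsRedSigma (G : RBGraph S C) (a b : C) (x y z : S) : Prop :=
  a ≠ b ∧ x ≠ y ∧ y ≠ z ∧ x ≠ z ∧
    G.red a x ∧ G.red a y ∧ G.red b y ∧ G.red b z ∧ ¬ G.adj a z ∧ ¬ G.adj b x

lemma IsRedSigma.of_edgesEqOn (h : G.IsRedSigma a b x y z) (hGH : EdgesEqOn G H {a, b}) :
    H.IsRedSigma a b x y z := by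
  obtain ⟨hb, hr⟩ := hGH
  unfold IsRedSigma adj at h ⊢
  rwa [← hb (by simp), ← hb (by simp), ← hr (by simp), ← hr (by simp)]

lemma IsRedSigma.unprunable (h : G.IsRedSigma a b x y z) : Unprunable G {a, b} := by
  intro H hGH c hc
  obtain ⟨-, -, -, -, hax, hay, hby, hbz, haz, hbx⟩ := h.of_edgesEqOn hGH
  rcases hc with rfl | rfl
  · exact not_redUniversal_of_sameComp ((sameComp_of_adj (.inr hay)).step (.inr hby) (.inr hbz))
      fun h => haz (.inr h)
  · exact not_redUniversal_of_sameComp ((sameComp_of_adj (.inr hby)).step (.inr hay) (.inr hax))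
      fun h => hbx (.inr h)

lemma IsRedSigma.redSigma_prune [Fintype C] (h : G.IsRedSigma a b x y z) :
    (prune G).redSigma :=
  ⟨a, b, x, y, z, h.of_edgesEqOn (prune_edgesEqOn h.unprunable)⟩

lemma redSigma_realize_of_inactive [Fintype C] (ha : G.inactive a) (hax : G.black a x)
    (hay : ¬ G.black a y) (haz : ¬ G.black a z) (hbx : G.red b x) (hbz : G.red b z)
    (hby : ¬ G.adj b y) (hy : G.sameComp a y) : (G.realize a).redSigma := by
  have hab : a ≠ b := fun h => ha ⟨x, h ▸ hbx⟩
  have hz : G.sameComp a z := (sameComp_of_adj (.inl hax)).step (.inr hbx) (.inr hbz)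
  refine IsRedSigma.redSigma_prune (G := G.preRealize a) ⟨hab, ?_, ?_, ?_,
    .inr ⟨rfl, hay, hy⟩, .inr ⟨rfl, haz, hz⟩, .inl hbz, .inl hbx, ?_, ?_⟩
  · rintro rfl; exact hby (.inr hbz)
  · rintro rfl; exact haz hax
  · rintro rfl; exact hay hax
  · rintro (⟨-, hne⟩ | hr | ⟨-, hb, -⟩)
    exacts [hne rfl, ha ⟨x, hr⟩, hb hax]
  · rintro (⟨hb, -⟩ | hr | ⟨hba, -⟩)
    exacts [hby (.inl hb), hby (.inr hr), hab hba.symm]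

section P7

variable {c1 c2 c3 : C} {s1 s2 s3 s4 : S}

/-- `s1 - c1 - s2 - c2 - s3 - c3 - s4` is an induced path of the relation `B`. -/
structure IsInducedP7 (B : C → S → Prop) (c1 c2 c3 : C) (s1 s2 s3 s4 : S) : Prop where
  e11 : B c1 s1
  e12 : B c1 s2
  e22 : B c2 s2
  e23 : B c2 s3
  e33 : B c3 s3
  e34 : B c3 s4
  n13 : ¬ B c1 s3
  n14 : ¬ B c1 s4
  n21 : ¬ B c2 s1
  n24 : ¬ B c2 s4
  n31 : ¬ B c3 s1
  n32 : ¬ B c3 s2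

lemma IsInducedP7.symm {B : C → S → Prop} (h : IsInducedP7 B c1 c2 c3 s1 s2 s3 s4) :
    IsInducedP7 B c3 c2 c1 s4 s3 s2 s1 :=
  ⟨h.e34, h.e33, h.e23, h.e22, h.e12, h.e11, h.n32, h.n31, h.n24, h.n21, h.n14, h.n13⟩

lemma IsInducedP7.congr {B B' : C → S → Prop} (h : IsInducedP7 B c1 c2 c3 s1 s2 s3 s4)
    (hB : Set.EqOn B B' {c1, c2, c3}) : IsInducedP7 B' c1 c2 c3 s1 s2 s3 s4 := by
  obtain ⟨h1, h2, h3⟩ : B c1 = B' c1 ∧ B c2 = B' c2 ∧ B c3 = B' c3 :=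
    ⟨hB (by simp), hB (by simp), hB (by simp)⟩
  obtain ⟨e11, e12, e22, e23, e33, e34, n13, n14, n21, n24, n31, n32⟩ := h
  exact ⟨h1 ▸ e11, h1 ▸ e12, h2 ▸ e22, h2 ▸ e23, h3 ▸ e33, h3 ▸ e34,
    h1 ▸ n13, h1 ▸ n14, h2 ▸ n21, h2 ▸ n24, h3 ▸ n31, h3 ▸ n32⟩

/-- The state of an induced P7 after its center `c2`, and neither `c1` nor `c3`, is realized. -/
structure CenterRealized (G : RBGraph S C) (c1 c2 c3 : C) (s1 s2 s3 s4 : S) : Prop where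
  e11 : G.black c1 s1
  e12 : G.black c1 s2
  e33 : G.black c3 s3
  e34 : G.black c3 s4
  n13 : ¬ G.black c1 s3
  n14 : ¬ G.black c1 s4
  n31 : ¬ G.black c3 s1
  n32 : ¬ G.black c3 s2
  inactive1 : G.inactive c1
  inactive3 : G.inactive c3
  r21 : G.red c2 s1
  r24 : G.red c2 s4
  na22 : ¬ G.adj c2 s2
  na23 : ¬ G.adj c2 s3

lemma CenterRealized.symm (h : G.CenterRealized c1 c2 c3 s1 s2 s3 s4) :
    G.CenterRealized c3 c2 c1 s4 s3 s2 s1 :=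
  ⟨h.e34, h.e33, h.e12, h.e11, h.n32, h.n31, h.n14, h.n13, h.inactive3, h.inactive1,
    h.r24, h.r21, h.na23, h.na22⟩

lemma CenterRealized.of_edgesEqOn (h : G.CenterRealized c1 c2 c3 s1 s2 s3 s4)
    (hGH : EdgesEqOn G H {c1, c2, c3}) : H.CenterRealized c1 c2 c3 s1 s2 s3 s4 := by
  obtain ⟨hb, hr⟩ := hGH
  obtain ⟨b1, b2, b3⟩ : G.black c1 = H.black c1 ∧ G.black c2 = H.black c2 ∧
      G.black c3 = H.black c3 := ⟨hb (by simp), hb (by simp), hb (by simp)⟩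
  obtain ⟨r1, r2, r3⟩ : G.red c1 = H.red c1 ∧ G.red c2 = H.red c2 ∧ G.red c3 = H.red c3 :=
    ⟨hr (by simp), hr (by simp), hr (by simp)⟩
  obtain ⟨e11, e12, e33, e34, n13, n14, n31, n32, i1, i3, r21, r24, na22, na23⟩ := h
  refine ⟨b1 ▸ e11, b1 ▸ e12, b3 ▸ e33, b3 ▸ e34, b1 ▸ n13, b1 ▸ n14, b3 ▸ n31, b3 ▸ n32,
    ?_, ?_, r2 ▸ r21, r2 ▸ r24, ?_, ?_⟩
  · rwa [inactive, active, ← r1]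
  · rwa [inactive, active, ← r3]
  · rwa [adj, ← b2, ← r2]
  · rwa [adj, ← b2, ← r2]

lemma CenterRealized.unprunable (h : G.CenterRealized c1 c2 c3 s1 s2 s3 s4) :
    Unprunable G {c1, c2, c3} := by
  intro H hGH c hc
  have hH := h.of_edgesEqOn hGH
  rcases hc with rfl | rfl | rfl
  · exact fun hu => hH.inactive1 hu.1
  · exact not_redUniversal_of_sameComp
      ((sameComp_of_adj (.inr hH.r21)).step (.inl hH.e11) (.inl hH.e12)) fun h => hH.na22 (.inr h)
  · exact fun hu => hH.inactive3 hu.1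

lemma CenterRealized.realizeSeq [Fintype C] (h : G.CenterRealized c1 c2 c3 s1 s2 s3 s4)
    {l : List C} (hl : ∀ c ∈ l, c ∉ ({c1, c2, c3} : Set C)) :
    (realizeSeq G l).CenterRealized c1 c2 c3 s1 s2 s3 s4 :=
  h.of_edgesEqOn (realizeSeq_edgesEqOn h.unprunable hl)

lemma CenterRealized.redSigma_realize [Fintype C]
    (h : G.CenterRealized c1 c2 c3 s1 s2 s3 s4) : (G.realize c1).redSigma :=
  redSigma_realize_of_inactive h.inactive1 h.e11 h.n13 h.n14 h.r21 h.r24 h.na23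
    (((sameComp_of_adj (.inl h.e11)).step (.inr h.r21) (.inr h.r24)).step (.inl h.e34)
      (.inl h.e33))

lemma IsInducedP7.centerRealized_realize [Fintype C]
    (hP : IsInducedP7 G.black c1 c2 c3 s1 s2 s3 s4)
    (hin : ∀ c ∈ ({c1, c2, c3} : Set C), G.inactive c) :
    (G.realize c2).CenterRealized c1 c2 c3 s1 s2 s3 s4 := by
  have hc12 : c1 ≠ c2 := fun h => hP.n21 (h ▸ hP.e11)
  have hc32 : c3 ≠ c2 := fun h => hP.n24 (h ▸ hP.e34)
  have hpre : (G.preRealize c2).CenterRealized c1 c2 c3 s1 s2 s3 s4 := by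
    refine ⟨⟨hP.e11, hc12⟩, ⟨hP.e12, hc12⟩, ⟨hP.e33, hc32⟩, ⟨hP.e34, hc32⟩,
      fun h => hP.n13 h.1, fun h => hP.n14 h.1, fun h => hP.n31 h.1, fun h => hP.n32 h.1,
      ?_, ?_, .inr ⟨rfl, hP.n21, ?_⟩, .inr ⟨rfl, hP.n24, ?_⟩, ?_, ?_⟩
    · rintro ⟨s, hr | ⟨h, -⟩⟩
      exacts [hin c1 (by simp) ⟨s, hr⟩, hc12 h]
    · rintro ⟨s, hr | ⟨h, -⟩⟩
      exacts [hin c3 (by simp) ⟨s, hr⟩, hc32 h]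
    · exact (sameComp_of_adj (.inl hP.e22)).step (.inl hP.e12) (.inl hP.e11)
    · exact (sameComp_of_adj (.inl hP.e23)).step (.inl hP.e33) (.inl hP.e34)
    · rintro (⟨-, hne⟩ | hr | ⟨-, hb, -⟩)
      exacts [hne rfl, hin c2 (by simp) ⟨s2, hr⟩, hb hP.e22]
    · rintro (⟨-, hne⟩ | hr | ⟨-, hb, -⟩)
      exacts [hne rfl, hin c2 (by simp) ⟨s3, hr⟩, hb hP.e23]
  rw [realize_eq_prune_preRealize]
  exact hpre.of_edgesEqOn (prune_edgesEqOn hpre.unprunable)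

theorem IsInducedP7.redSigma_of_idxOf_lt [Fintype C] [DecidableEq C] {M : C → S → Prop}
    (hP : IsInducedP7 M c1 c2 c3 s1 s2 s3 s4) {l : List C} (hl : l.Nodup) (hc1 : c1 ∈ l)
    (h21 : l.idxOf c2 < l.idxOf c1) (h13 : l.idxOf c1 ≤ l.idxOf c3) :
    (realizeSeq (ofMatrix M) (l.take (l.idxOf c1 + 1))).redSigma := by
  set k := l.idxOf c2
  set m := l.idxOf c1
  have hm : m < l.length := List.idxOf_lt_length_of_mem hc1
  have hk : k < l.length := h21.trans hm
  set G₀ := realizeSeq (ofMatrix M) (l.take k)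
  have hG₀ : EdgesEqOn (ofMatrix M) G₀ {c1, c2, c3} := by
    refine realizeSeq_edgesEqOn (unprunable_of_inactive fun _ _ ⟨_, hs⟩ => hs) ?_
    rintro c hc (rfl | rfl | rfl)
    exacts [List.notMem_take_of_le_idxOf h21.le hc, List.notMem_take_of_le_idxOf le_rfl hc,
      List.notMem_take_of_le_idxOf (h21.le.trans h13) hc]
  have hG₁ : (G₀.realize c2).CenterRealized c1 c2 c3 s1 s2 s3 s4 :=
    (hP.congr hG₀.1).centerRealized_realize fun c hc ⟨s, hs⟩ => by rwa [← hG₀.2 hc] at hs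
  set mid := (l.drop (k + 1)).take (m - (k + 1))
  have htake : l.take m = l.take (k + 1) ++ mid := by
    rw [← List.take_add, Nat.add_sub_cancel' h21]
  have hmid : ∀ c ∈ mid, c ∉ ({c1, c2, c3} : Set C) := by
    rintro c hc (rfl | rfl | rfl)
    · exact List.notMem_take_of_le_idxOf le_rfl (htake ▸ List.mem_append_right _ hc)
    · refine List.disjoint_take_drop hl le_rfl ?_ (List.take_subset _ _ hc)
      exact (List.mem_take_iff_idxOf_lt (List.mem_of_mem_drop (List.take_subset _ _ hc))).2
        (Nat.lt_succ_self k)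
    · exact List.notMem_take_of_le_idxOf h13 (htake ▸ List.mem_append_right _ hc)
  rw [realizeSeq_take_add_one _ hm, List.getElem_idxOf hm, htake, realizeSeq_append,
    realizeSeq_take_add_one _ hk, List.getElem_idxOf hk]
  exact (hG₁.realizeSeq hmid).redSigma_realize

end P7

end RBGraph

theorem center_of_P7_not_first_general {S C : Type} [Fintype C] [DecidableEq C]
    (M : C → S → Prop) (s1 s2 s3 s4 : S) (c1 c2 c3 : C)
    (e11 : M c1 s1) (e12 : M c1 s2) (e22 : M c2 s2) (e23 : M c2 s3)
    (e33 : M c3 s3) (e34 : M c3 s4)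
    (n13 : ¬ M c1 s3) (n14 : ¬ M c1 s4) (n21 : ¬ M c2 s1) (n24 : ¬ M c2 s4)
    (n31 : ¬ M c3 s1) (n32 : ¬ M c3 s2)
    (l : List C) (hl : RBGraph.isReduction M l) :
    ¬ (l.idxOf c2 < l.idxOf c1 ∧ l.idxOf c2 < l.idxOf c3) := by
  rintro ⟨h21, h23⟩
  obtain ⟨hnd, hmem, -, hsig⟩ := hl
  have hP : RBGraph.IsInducedP7 M c1 c2 c3 s1 s2 s3 s4 :=
    ⟨e11, e12, e22, e23, e33, e34, n13, n14, n21, n24, n31, n32⟩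
  rcases le_total (l.idxOf c1) (l.idxOf c3) with h13 | h31
  · exact hsig _ (List.idxOf_lt_length_of_mem (hmem c1))
      (hP.redSigma_of_idxOf_lt hnd (hmem c1) h21 h13)
  · exact hsig _ (List.idxOf_lt_length_of_mem (hmem c3))
      (hP.symm.redSigma_of_idxOf_lt hnd (hmem c3) h23 h31)

/-- the central character of an induced P7 cannot be the first of
the three characters of the path to be realized in a reduction. -/
theorem center_of_P7_not_first {S C : Type} [Fintype C] [DecidableEq C]
    (M : C → S → Prop) (s1 s2 s3 s4 : S) (c1 c2 c3 : C)
    (hc12 : c1 ≠ c2) (hc23 : c2 ≠ c3) (hc13 : c1 ≠ c3)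
    (hs12 : s1 ≠ s2) (hs13 : s1 ≠ s3) (hs14 : s1 ≠ s4)
    (hs23 : s2 ≠ s3) (hs24 : s2 ≠ s4) (hs34 : s3 ≠ s4)
    (e11 : M c1 s1) (e12 : M c1 s2) (e22 : M c2 s2) (e23 : M c2 s3)
    (e33 : M c3 s3) (e34 : M c3 s4)
    (n13 : ¬ M c1 s3) (n14 : ¬ M c1 s4) (n21 : ¬ M c2 s1) (n24 : ¬ M c2 s4)
    (n31 : ¬ M c3 s1) (n32 : ¬ M c3 s2)
    (l : List C) (hl : RBGraph.isReduction M l) :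
    ¬ (l.idxOf c2 < l.idxOf c1 ∧ l.idxOf c2 < l.idxOf c3) :=
  center_of_P7_not_first_general M s1 s2 s3 s4 c1 c2 c3 e11 e12 e22 e23 e33 e34 n13 n14 n21 n24 n31
    n32 l hl
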